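/- Let n ≥ 2, k ≥ 1, and P = (Z/2^kZ)^n. Then SpecR(P) = {2^i : 0 ≤ i ≤ nk}. -/

import Mathlib

/-- The Reidemeister number of an (additive) endomorphism `φ`: the number of
`φ`-twisted conjugacy classes, where `x` and `y` are `φ`-conjugate iff
`x = z + y - φ z` for some `z`. -/
noncomputable def twistedClasses {A : Type*} [AddCommGroup A] (φ : A →+ A) : ℕ :=
  Nat.card (Quot (fun x y : A => ∃ z : A, x = z + y - φ z))

/-- The Reidemeister spectrum: the set of Reidemeister numbers of automorphisms. -/
noncomputable def reidSpec (A : Type*) [AddCommGroup A] : Set ℕ :=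
  {r | ∃ φ : A ≃+ A, twistedClasses φ.toAddMonoidHom = r}

/-!
For a finite abelian group `A`, two elements are `φ`-conjugate iff they differ by an element of
the image of `1 - φ`, so `R(φ) = [A : im (1 - φ)] = |ker (1 - φ)|` is the number of fixed points
of `φ`, a divisor of `|A| = 2 ^ (n k)`.

Conversely write `i = c + q k` with `c ≤ k` and split `(ℤ/2^k)^n = (ℤ/2^k)^(m+1) × (ℤ/2^k)^q`.
The identity of the second factor fixes `2 ^ (q k)` points. On the first factor the twisted shift
`(x₀, …, xₘ) ↦ (x₁, …, xₘ, x₀ + 2^c xₘ)` is an automorphism as soon as `m ≥ 1` or `c ≥ 1`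
(then `1 + 2^c` is odd), and its fixed points are the constant vectors killed by `2^c`,
of which there are `2^c`.
-/

section Reidemeister

variable {A B : Type*} [AddCommGroup A] [AddCommGroup B]

theorem twistedClasses_eq_index (φ : A →+ A) :
    twistedClasses φ = (AddMonoidHom.id A - φ).range.index := by
  refine Nat.card_congr (Quot.congrRight fun x y => ?_)
  rw [QuotientAddGroup.leftRel_apply]
  constructor
  · rintro ⟨z, rfl⟩
    exact ⟨-z, by simp; abel⟩
  · rintro ⟨z, hz⟩
    refine ⟨-z, ?_⟩
    simp only [AddMonoidHom.sub_apply, AddMonoidHom.id_apply] at hz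
    rw [map_neg, show y = x + (z - φ z) by rw [hz]; abel]
    abel

theorem twistedClasses_eq_card_ker [Finite A] (φ : A →+ A) :
    twistedClasses φ = Nat.card (AddMonoidHom.id A - φ).ker := by
  rw [twistedClasses_eq_index, AddSubgroup.index_range]

theorem twistedClasses_addEquiv_conj (e : A ≃+ B) (φ : A →+ A) :
    twistedClasses ((e : A →+ B).comp (φ.comp e.symm)) = twistedClasses φ := by
  refine (Nat.card_congr (Quot.congr e.toEquiv fun x y => ?_)).symm
  constructor
  · rintro ⟨z, rfl⟩
    exact ⟨e z, by simp⟩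
  · rintro ⟨w, hw⟩
    refine ⟨e.symm w, e.injective ?_⟩
    simpa using hw

theorem reidSpec_subset_of_addEquiv (e : A ≃+ B) : reidSpec A ⊆ reidSpec B := by
  rintro _ ⟨φ, rfl⟩
  exact ⟨e.symm.trans (φ.trans e), twistedClasses_addEquiv_conj e φ⟩

theorem mul_mem_reidSpec_prod {a b : ℕ} (ha : a ∈ reidSpec A) (hb : b ∈ reidSpec B) :
    a * b ∈ reidSpec (A × B) := by
  obtain ⟨φ, rfl⟩ := ha
  obtain ⟨ψ, rfl⟩ := hb
  refine ⟨φ.prodCongr ψ, ?_⟩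
  have : AddMonoidHom.id (A × B) - (φ.prodCongr ψ).toAddMonoidHom =
      (AddMonoidHom.id A - φ.toAddMonoidHom).prodMap
        (AddMonoidHom.id B - ψ.toAddMonoidHom) := by
    ext <;> simp <;> rfl
  simp only [twistedClasses_eq_index, this, AddMonoidHom.range_prodMap, AddSubgroup.index_prod]

theorem natCard_mem_reidSpec [Finite A] : Nat.card A ∈ reidSpec A :=
  ⟨AddEquiv.refl A, by simp [twistedClasses_eq_card_ker]⟩

theorem card_ker_mem_reidSpec [Finite A] {φ : A →+ A} (hφ : Function.Injective φ) :
    Nat.card (AddMonoidHom.id A - φ).ker ∈ reidSpec A :=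
  ⟨AddEquiv.ofBijective φ (Finite.injective_iff_bijective.mp hφ), twistedClasses_eq_card_ker _⟩

theorem dvd_card_of_mem_reidSpec [Finite A] {r : ℕ} (hr : r ∈ reidSpec A) : r ∣ Nat.card A := by
  obtain ⟨φ, rfl⟩ := hr
  rw [twistedClasses_eq_card_ker]
  exact AddSubgroup.card_addSubgroup_dvd_card _

end Reidemeister

section TwistedShift

variable {A : Type*} [AddCommGroup A]

def twistedShift (f : A →+ A) (m : ℕ) : (Fin (m + 1) → A) →+ (Fin (m + 1) → A) where
  toFun x := Fin.snoc (Fin.tail x) (x 0 + f (x (Fin.last m)))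
  map_zero' := by
    ext j
    refine Fin.lastCases ?_ (fun i => ?_) j <;> simp [Fin.tail]
  map_add' x y := by
    ext j
    refine Fin.lastCases ?_ (fun i => ?_) j
    · simp only [Fin.snoc_last, Pi.add_apply, map_add]
      abel
    · simp [Fin.tail]

variable (f : A →+ A) (m : ℕ)

@[simp]
theorem twistedShift_castSucc (x : Fin (m + 1) → A) (i : Fin m) :
    twistedShift f m x i.castSucc = x i.succ := by
  simp [twistedShift, Fin.tail]

@[simp]
theorem twistedShift_last (x : Fin (m + 1) → A) :
    twistedShift f m x (Fin.last m) = x 0 + f (x (Fin.last m)) := by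
  simp [twistedShift]

theorem ker_id_sub_twistedShift :
    (AddMonoidHom.id _ - twistedShift f m).ker =
      f.ker.map (Pi.constAddMonoidHom (Fin (m + 1)) A) := by
  ext x
  simp only [AddMonoidHom.mem_ker, AddMonoidHom.sub_apply, AddMonoidHom.id_apply, sub_eq_zero,
    AddSubgroup.mem_map]
  constructor
  · intro hx
    have hconst : ∀ j, x j = x 0 := by
      intro j
      induction j using Fin.induction with
      | zero => rfl
      | succ i ih => rw [← twistedShift_castSucc f m x i, ← hx, ih]
    have hlast := twistedShift_last f m x
    rw [← hx, hconst (Fin.last m), left_eq_add] at hlast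
    exact ⟨x 0, hlast, funext fun j => (hconst j).symm⟩
  · rintro ⟨c, hc, rfl⟩
    ext j
    refine Fin.lastCases ?_ (fun i => ?_) j
    · simp [hc]
    · simp

theorem card_ker_id_sub_twistedShift :
    Nat.card (AddMonoidHom.id _ - twistedShift f m).ker = Nat.card f.ker := by
  rw [ker_id_sub_twistedShift]
  exact AddSubgroup.card_map_of_injective (Function.const_injective (β := A))

theorem twistedShift_injective (h : m ≠ 0 ∨ Function.Injective (AddMonoidHom.id A + f)) :
    Function.Injective (twistedShift f m) := by
  rw [injective_iff_map_eq_zero]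
  intro x hx
  have htail (i : Fin m) : x i.succ = 0 := by
    rw [← twistedShift_castSucc f m x i, hx, Pi.zero_apply]
  have hlast : x 0 + f (x (Fin.last m)) = 0 := by
    rw [← twistedShift_last, hx, Pi.zero_apply]
  have h0 : x 0 = 0 := by
    cases m with
    | zero => exact h.resolve_left (by simp) (by simpa using hlast)
    | succ m => rwa [← Fin.succ_last, htail, map_zero, add_zero] at hlast
  funext j
  induction j using Fin.cases with
  | zero => exact h0
  | succ i => exact htail i

end TwistedShift

theorem ZMod.card_ker_nsmul_of_dvd {n d : ℕ} [NeZero n] (h : d ∣ n) :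
    Nat.card (nsmulAddMonoidHom d : ZMod n →+ ZMod n).ker = d := by
  rw [IsAddCyclic.card_nsmulAddMonoidHom_ker, Nat.card_zmod, Nat.gcd_eq_right h]

theorem injective_id_add_nsmul_of_coprime {G : Type*} [AddCommGroup G] [Finite G] {d : ℕ}
    (h : (Nat.card G).Coprime (d + 1)) :
    Function.Injective (AddMonoidHom.id G + nsmulAddMonoidHom (α := G) d) := by
  have : AddMonoidHom.id G + nsmulAddMonoidHom d = nsmulAddMonoidHom (d + 1) := by
    ext x
    simp [succ_nsmul']
  rw [this]
  exact (nsmulCoprime h).injective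

theorem exists_split_exponent {n k i : ℕ} (hn : 2 ≤ n) (hi : i ≤ n * k) :
    ∃ m q c, n = m + 1 + q ∧ i = c + q * k ∧ c ≤ k ∧ (m ≠ 0 ∨ c ≠ 0) := by
  rcases Nat.eq_zero_or_pos i with rfl | hi0
  · exact ⟨n - 1, 0, 0, by omega, by simp, by simp, Or.inl (by omega)⟩
  have hk : 0 < k := Nat.pos_of_ne_zero (by rintro rfl; omega)
  have hq : (i - 1) / k < n := (Nat.div_lt_iff_lt_mul hk).mpr (by omega)
  have hdiv := Nat.div_add_mod' (i - 1) k
  have hmod := Nat.mod_lt (i - 1) hk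
  exact ⟨n - 1 - (i - 1) / k, (i - 1) / k, (i - 1) % k + 1, by omega, by omega, by omega,
    Or.inr (by omega)⟩

theorem two_pow_mem_reidSpec_pi_zmod {n k i : ℕ} (hn : 2 ≤ n) (hi : i ≤ n * k) :
    2 ^ i ∈ reidSpec (Fin n → ZMod (2 ^ k)) := by
  obtain ⟨m, q, c, rfl, rfl, hck, hmc⟩ := exists_split_exponent hn hi
  have hinj :
      Function.Injective (twistedShift (nsmulAddMonoidHom (2 ^ c) : ZMod (2 ^ k) →+ _) m) := by
    refine twistedShift_injective _ m (hmc.imp_right fun hc => ?_)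
    refine injective_id_add_nsmul_of_coprime ?_
    rw [Nat.card_zmod]
    exact (Nat.coprime_two_left.mpr (Nat.even_pow.mpr ⟨even_two, hc⟩).add_one).pow_left k
  have hshift := card_ker_mem_reidSpec hinj
  rw [card_ker_id_sub_twistedShift, ZMod.card_ker_nsmul_of_dvd (Nat.pow_dvd_pow 2 hck)] at hshift
  let e : (Fin (m + 1) → ZMod (2 ^ k)) × (Fin q → ZMod (2 ^ k)) ≃+
      (Fin (m + 1 + q) → ZMod (2 ^ k)) :=
    ((RingEquiv.sumArrowEquivProdArrow _ _ _).symm.trans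
      (RingEquiv.piCongrLeft (fun _ => ZMod (2 ^ k)) finSumFinEquiv)).toAddEquiv
  have := reidSpec_subset_of_addEquiv e (mul_mem_reidSpec_prod hshift natCard_mem_reidSpec)
  rwa [Nat.card_fun, Nat.card_zmod, Nat.card_fin, ← pow_mul, ← pow_add, mul_comm k] at this

theorem reidSpec_pi_zmod_subset {n k : ℕ} :
    reidSpec (Fin n → ZMod (2 ^ k)) ⊆ {r | ∃ i, i ≤ n * k ∧ r = 2 ^ i} := by
  intro r hr
  have := dvd_card_of_mem_reidSpec hr
  rwa [Nat.card_fun, Nat.card_zmod, Nat.card_fin, ← pow_mul, mul_comm,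
    Nat.dvd_prime_pow Nat.prime_two] at this

theorem stmt_18_general (n k : ℕ) (hn : 2 ≤ n) :
    reidSpec (∀ _ : Fin n, ZMod (2 ^ k)) = {r | ∃ i, i ≤ n * k ∧ r = 2 ^ i} := by
  refine reidSpec_pi_zmod_subset.antisymm ?_
  rintro _ ⟨i, hi, rfl⟩
  exact two_pow_mem_reidSpec_pi_zmod hn hi

theorem stmt_18 (n k : ℕ) (hn : 2 ≤ n) (hk : 1 ≤ k) :
    reidSpec (∀ _ : Fin n, ZMod (2 ^ k)) = {r | ∃ i, i ≤ n * k ∧ r = 2 ^ i} :=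
  stmt_18_general n k hn
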